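/- arXiv:0909.5007 — 2 statements merged into one kernel-verified Lean document; each statement's English description precedes it below -/
import Mathlib

section
/- Let s_1, s_2, s_3 be binary sequences of common period P such that for every nonempty subset A ⊆ {1,2,3} the generalized Hamming cross-correlation of (s_j)_{j∈A} is independent of the shifts. Then the quantity Σ_{k ∈ ZMod P} s_1(k−τ_1)·(1−s_2(k−τ_2))·(1−s_3(k−τ_3)) is independent of the shifts (τ_1, τ_2, τ_3) ∈ (ZMod P)³, i.e., it equals its value at τ_1 = τ_2 = τ_3 = 0. -/
/-!
Expanding `∏ (1 - s_j)` over the complemented sequences by inclusion–exclusion writes the sum as a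
signed combination of generalized Hamming cross-correlations, each of which involves `s₁` and so
a nonempty set of sequences; all of them are shift-independent by hypothesis.
-/

open Finset

section CrossCorrelation

variable {ι G R : Type*} [DecidableEq ι] [AddCommGroup G] [Fintype G] [CommRing R]

def crossCorrelation (s : ι → G → R) (A : Finset ι) (τ : ι → G) : R :=
  ∑ k, ∏ j ∈ A, s j (k - τ j)

theorem sum_prod_mul_prod_one_sub_eq_sum_powerset {A B : Finset ι} (hAB : Disjoint A B)
    (s : ι → G → R) (τ : ι → G) :
    ∑ k, (∏ j ∈ A, s j (k - τ j)) * ∏ j ∈ B, (1 - s j (k - τ j))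
      = ∑ C ∈ B.powerset, (-1) ^ #C * crossCorrelation s (A ∪ C) τ := by
  have hprod : ∀ k, ∏ j ∈ B, (1 - s j (k - τ j))
      = ∑ C ∈ B.powerset, (-1) ^ #C * ∏ j ∈ C, s j (k - τ j) := fun k => by
    simp [prod_sub]
  have hunion : ∀ C ∈ B.powerset, ∀ k,
      (∏ j ∈ A, s j (k - τ j)) * ∏ j ∈ C, s j (k - τ j) = ∏ j ∈ A ∪ C, s j (k - τ j) :=
    fun C hC k => (prod_union (hAB.mono_right (mem_powerset.mp hC))).symm
  simp only [crossCorrelation, hprod, mul_sum, sum_comm (s := univ), mul_left_comm _ ((-1 : R) ^ _)]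
  refine sum_congr rfl fun C hC => ?_
  simp only [hunion C hC]

theorem sum_prod_mul_prod_one_sub_shift_invariant (s : ι → G → R)
    (hSI : ∀ A : Finset ι, A.Nonempty → ∀ τ τ' : ι → G,
      crossCorrelation s A τ = crossCorrelation s A τ')
    {A B : Finset ι} (hA : A.Nonempty) (hAB : Disjoint A B) (τ τ' : ι → G) :
    ∑ k, (∏ j ∈ A, s j (k - τ j)) * ∏ j ∈ B, (1 - s j (k - τ j))
      = ∑ k, (∏ j ∈ A, s j (k - τ' j)) * ∏ j ∈ B, (1 - s j (k - τ' j)) := by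
  simp only [sum_prod_mul_prod_one_sub_eq_sum_powerset hAB,
    hSI _ (hA.mono subset_union_left) τ τ']

end CrossCorrelation

theorem throughput_shift_independent_general (P : ℕ) [NeZero P]
    (s : Fin 3 → ZMod P → ℝ)
    (hSI : ∀ A : Finset (Fin 3), A.Nonempty →
      ∀ τ τ' : Fin 3 → ZMod P,
        ∑ k : ZMod P, ∏ j ∈ A, s j (k - τ j)
          = ∑ k : ZMod P, ∏ j ∈ A, s j (k - τ' j)) :
    ∀ τ : Fin 3 → ZMod P,
      ∑ k : ZMod P, s 0 (k - τ 0) * (1 - s 1 (k - τ 1)) * (1 - s 2 (k - τ 2))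
        = ∑ k : ZMod P, s 0 k * (1 - s 1 k) * (1 - s 2 k) := by
  intro τ
  have h := sum_prod_mul_prod_one_sub_shift_invariant s hSI (A := {0}) (B := {1, 2})
    (singleton_nonempty 0) (by decide) τ 0
  simpa [mul_assoc] using h

/-- If the generalized Hamming cross-correlations of three binary sequences of common
period `P` (over all nonempty subsets of the three sequences) are independent of the
shifts, then the throughput quantity
`Σ_k s₁(k−τ₁)(1−s₂(k−τ₂))(1−s₃(k−τ₃))` is independent of the shifts, i.e., it equals
its value at `τ₁ = τ₂ = τ₃ = 0`. -/
theorem throughput_shift_independent (P : ℕ) [NeZero P]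
    (s : Fin 3 → ZMod P → ℝ)
    (hbin : ∀ j k, s j k = 0 ∨ s j k = 1)
    (hSI : ∀ A : Finset (Fin 3), A.Nonempty →
      ∀ τ τ' : Fin 3 → ZMod P,
        ∑ k : ZMod P, ∏ j ∈ A, s j (k - τ j)
          = ∑ k : ZMod P, ∏ j ∈ A, s j (k - τ' j)) :
    ∀ τ : Fin 3 → ZMod P,
      ∑ k : ZMod P, s 0 (k - τ 0) * (1 - s 1 (k - τ 1)) * (1 - s 2 (k - τ 2))
        = ∑ k : ZMod P, s 0 k * (1 - s 1 k) * (1 - s 2 k) :=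
  throughput_shift_independent_general P s hSI
end

section
/- For every integer d ≥ 1, all natural numbers n_1, n_2, n_3 with n_1, n_2, n_3 ≤ d, and all integers τ_1, τ_2, τ_3: Σ_{k=0}^{d³−1} χ[((k−τ_1) mod d) < n_1] · χ[((k−τ_2) mod d²) < d·n_2] · χ[((k−τ_3) mod d³) < d²·n_3] = n_1·n_2·n_3. In particular, this triple correlation is independent of the shifts τ_1, τ_2, τ_3. -/
/-!
Each factor is periodic with period its modulus, and each period divides the next. Over a full
period of the outermost factor the sum is invariant under translation, so its shift can be
removed; its support then becomes the initial segment `[0, d^(j-1) n_j)`, which consists of `n_j`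
whole periods of the product of the inner factors. Peeling off one factor at a time gives
`n₃ · n₂ · n₁`.
-/

open Finset Function

namespace Function.Periodic

variable {M : Type*} {g : ℤ → M} {p : ℕ}

theorem sum_range_comp_add [AddCommGroup M] (hg : Periodic g p) (a : ℤ) :
    ∑ k ∈ range p, g (k + a) = ∑ k ∈ range p, g k := by
  have step (b : ℤ) : ∑ k ∈ range p, g (k + (b + 1)) = ∑ k ∈ range p, g (k + b) := by
    have h := sum_range_succ' (fun k : ℕ => g (k + b)) p
    rw [sum_range_succ] at h
    simp only [Nat.cast_add, Nat.cast_one, Nat.cast_zero, zero_add, add_assoc, add_comm 1 b] at h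
    rw [add_comm (p : ℤ), hg b] at h
    exact (add_right_cancel h).symm
  induction a using Int.induction_on with
  | zero => simp
  | succ i ih => rw [step, ih]
  | pred i ih => rw [← ih, ← step, sub_add_cancel]

theorem sum_range_mul [AddCommMonoid M] (hg : Periodic g p) (n : ℕ) :
    ∑ k ∈ range (n * p), g k = n • ∑ k ∈ range p, g k := by
  induction n with
  | zero => simp
  | succ n ih =>
    rw [add_mul, one_mul, sum_range_add, ih, succ_nsmul]
    congr 1
    refine sum_congr rfl fun k _ => ?_
    push_cast
    rw [add_comm]
    exact hg.nat_mul n k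

end Function.Periodic

variable {R : Type*}

def blockIndicator [Zero R] [One R] (q n τ k : ℤ) : R :=
  if (k - τ) % q < n then 1 else 0

theorem periodic_blockIndicator [Zero R] [One R] (q n τ : ℤ) :
    Periodic (blockIndicator (R := R) q n τ) q := fun k => by
  simp only [blockIndicator, add_sub_right_comm, Int.add_emod_right]

theorem sum_mul_blockIndicator [Ring R] {A : ℤ → R} {m : ℕ} (hA : Periodic A m) {d n : ℕ}
    (hn : n ≤ d) (τ : ℤ) :
    ∑ k ∈ range (m * d), A k * blockIndicator (m * d) (m * n) τ k = n * ∑ k ∈ range m, A k := by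
  have hper : Periodic (fun k => A k * blockIndicator (m * d) (m * n) τ k) (m * d : ℕ) := by
    refine Periodic.mul ?_ (by exact_mod_cast periodic_blockIndicator _ _ _)
    simpa only [Nat.cast_mul, mul_comm] using hA.nat_mul d
  have hcut : (range (m * d)).filter (· < m * n) = range (m * n) := by
    ext k
    simp only [mem_filter, mem_range]
    constructor
    · exact And.right
    · exact fun hk => ⟨hk.trans_le (Nat.mul_le_mul_left m hn), hk⟩
  calc ∑ k ∈ range (m * d), A k * blockIndicator (m * d) (m * n) τ k
      = ∑ k ∈ range (m * d), A (k + τ) * blockIndicator (m * d) (m * n) τ (k + τ) :=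
        (hper.sum_range_comp_add τ).symm
    _ = ∑ k ∈ range (m * d), if k < m * n then A (k + τ) else 0 := by
        refine sum_congr rfl fun k hk => ?_
        have hk : (k : ℤ) % (m * d) = k :=
          Int.emod_eq_of_lt k.cast_nonneg (by exact_mod_cast mem_range.mp hk)
        simp only [blockIndicator, add_sub_cancel_right, hk, mul_ite, mul_one, mul_zero]
        norm_cast
    _ = ∑ k ∈ range (m * n), A (k + τ) := by rw [← sum_filter, hcut]
    _ = n * ∑ k ∈ range m, A k := by
        rw [mul_comm m n, (hA.add_const τ).sum_range_mul, hA.sum_range_comp_add, nsmul_eq_mul]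

theorem sum_blockIndicator [Ring R] {d n : ℕ} (hn : n ≤ d) (τ : ℤ) :
    ∑ k ∈ range d, blockIndicator (R := R) d n τ k = n := by
  simpa using sum_mul_blockIndicator (A := fun _ => (1 : R)) (m := 1) (fun _ => rfl) hn τ

theorem triple_correlation_shift_invariant_general
    (d : ℕ) (n₁ n₂ n₃ : ℕ)
    (h₁ : n₁ ≤ d) (h₂ : n₂ ≤ d) (h₃ : n₃ ≤ d)
    (τ₁ τ₂ τ₃ : ℤ) :
    ∑ k ∈ Finset.range (d ^ 3),
        (if ((k : ℤ) - τ₁) % (d : ℤ) < (n₁ : ℤ) then (1 : ℤ) else 0)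
          * (if ((k : ℤ) - τ₂) % ((d : ℤ) ^ 2) < (d : ℤ) * (n₂ : ℤ) then 1 else 0)
          * (if ((k : ℤ) - τ₃) % ((d : ℤ) ^ 3) < (d : ℤ) ^ 2 * (n₃ : ℤ) then 1 else 0)
      = (n₁ : ℤ) * n₂ * n₃ := by
  have hper₁ : Periodic (blockIndicator (R := ℤ) d n₁ τ₁) d := periodic_blockIndicator _ _ _
  have hper₂ : Periodic (fun k => blockIndicator (R := ℤ) d n₁ τ₁ k *
      blockIndicator (d * d) (d * n₂) τ₂ k) (d * d : ℕ) := by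
    refine Periodic.mul ?_ (by exact_mod_cast periodic_blockIndicator _ _ _)
    exact_mod_cast hper₁.nat_mul d
  rw [show d ^ 3 = d * d * d by ring, show (d : ℤ) ^ 3 = (d * d : ℕ) * d by push_cast; ring,
    show (d : ℤ) ^ 2 * n₃ = (d * d : ℕ) * n₃ by push_cast; ring, sq]
  change ∑ k ∈ range (d * d * d), blockIndicator d n₁ τ₁ k * blockIndicator (d * d) (d * n₂) τ₂ k
    * blockIndicator ((d * d : ℕ) * d) ((d * d : ℕ) * n₃) τ₃ k = _
  rw [sum_mul_blockIndicator hper₂ h₃, sum_mul_blockIndicator hper₁ h₂, sum_blockIndicator h₁]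
  ring

/-- Triple-correlation identity underlying Proposition 1: for the constructed protocol
sequences at scales `d`, `d²`, `d³`, the generalized Hamming cross-correlation over one
period `d³` equals `n₁·n₂·n₃`, independently of the shifts `τ₁, τ₂, τ₃`. -/
theorem triple_correlation_shift_invariant
    (d : ℕ) (hd : 1 ≤ d) (n₁ n₂ n₃ : ℕ)
    (h₁ : n₁ ≤ d) (h₂ : n₂ ≤ d) (h₃ : n₃ ≤ d)
    (τ₁ τ₂ τ₃ : ℤ) :
    ∑ k ∈ Finset.range (d ^ 3),
        (if ((k : ℤ) - τ₁) % (d : ℤ) < (n₁ : ℤ) then (1 : ℤ) else 0)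
          * (if ((k : ℤ) - τ₂) % ((d : ℤ) ^ 2) < (d : ℤ) * (n₂ : ℤ) then 1 else 0)
          * (if ((k : ℤ) - τ₃) % ((d : ℤ) ^ 3) < (d : ℤ) ^ 2 * (n₃ : ℤ) then 1 else 0)
      = (n₁ : ℤ) * n₂ * n₃ :=
  triple_correlation_shift_invariant_general d n₁ n₂ n₃ h₁ h₂ h₃ τ₁ τ₂ τ₃
end
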